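/- Let f be differentiable on an open interval containing [a,b] (a < b) with f' integrable, q > 1 with 1/p + 1/q = 1, and suppose |f'|^q is quasi-convex on [a,b]. Then the midpoint inequality holds: |f((a+b)/2) − (1/(b−a)) ∫_a^b f(x) dx| ≤ ((b−a)/(4(p+1)^(1/p))) [ (max{|f'((a+b)/2)|^q, |f'(a)|^q})^(1/q) + (max{|f'((a+b)/2)|^q, |f'(b)|^q})^(1/q) ]. -/

import Mathlib

/-!
Integrating by parts against the kernel `x - a` on `[a, m]` and `x - b` on `[m, b]`, where `m` is
the midpoint, gives `(b - a) f(m) - ∫ f = ∫ K f'`. Quasi-convexity of `|f'|^q` bounds `|f'|` on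
each half by the `q`-th root of the larger of its values at the ends of that half, and
`∫ |K| = (b - a)^2 / 8` on each half. This yields the bound with the constant `(b - a) / 8`, which
is at most the stated one because `(p + 1)^(1/p) ≤ 2` for `p ≥ 1`.
-/

open MeasureTheory Set intervalIntegral

theorem QuasiconvexOn.le_max_of_mem_segment {𝕜 E β : Type*} [Semiring 𝕜] [PartialOrder 𝕜]
    [AddCommMonoid E] [SMul 𝕜 E] [LinearOrder β] {s : Set E} {g : E → β} {x y z : E}
    (hg : QuasiconvexOn 𝕜 s g) (hy : y ∈ s) (hz : z ∈ s) (hx : x ∈ segment 𝕜 y z) :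
    g x ≤ max (g y) (g z) :=
  ((hg _).segment_subset ⟨hy, le_max_left _ _⟩ ⟨hz, le_max_right _ _⟩ hx).2

theorem abs_le_max_rpow_one_div_of_quasiconvexOn {s : Set ℝ} {g : ℝ → ℝ} {q x y z : ℝ}
    (hq : 0 < q) (hg : QuasiconvexOn ℝ s fun x => |g x| ^ q) (hy : y ∈ s) (hz : z ∈ s)
    (hx : x ∈ uIcc y z) :
    |g x| ≤ (max (|g y| ^ q) (|g z| ^ q)) ^ (1 / q) := by
  rw [one_div, Real.le_rpow_inv_iff_of_pos (abs_nonneg _) (le_max_of_le_left (by positivity)) hq]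
  exact hg.le_max_of_mem_segment hy hz (segment_eq_uIcc y z ▸ hx)

theorem integral_sub_mul_deriv {f f' : ℝ → ℝ} {u v w : ℝ}
    (hf : ∀ x ∈ uIcc u v, HasDerivAt f (f' x) x) (hf' : IntervalIntegrable f' volume u v) :
    ∫ x in u..v, (x - w) * f' x = (v - w) * f v - (u - w) * f u - ∫ x in u..v, f x := by
  simpa using integral_mul_deriv_eq_deriv_mul (fun x _ => (hasDerivAt_id x).sub_const w) hf
    intervalIntegrable_const hf'

theorem mul_sub_integral_eq_integral_add_integral {f f' : ℝ → ℝ} {a b m : ℝ}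
    (ham : a ≤ m) (hmb : m ≤ b) (hf : ∀ x ∈ Icc a b, HasDerivAt f (f' x) x)
    (hf' : IntervalIntegrable f' volume a b) :
    (b - a) * f m - ∫ x in a..b, f x
      = (∫ x in a..m, (x - a) * f' x) + ∫ x in m..b, (x - b) * f' x := by
  have hderiv : ∀ x ∈ uIcc a b, HasDerivAt f (f' x) x := fun x hx =>
    hf x (uIcc_of_le (ham.trans hmb) ▸ hx)
  have hfc : ContinuousOn f (uIcc a b) := fun x hx =>
    (hderiv x hx).continuousAt.continuousWithinAt
  have hsub₁ : uIcc a m ⊆ uIcc a b := uIcc_subset_uIcc_left (by simp [uIcc, ham, hmb])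
  have hsub₂ : uIcc m b ⊆ uIcc a b := uIcc_subset_uIcc_right (by simp [uIcc, ham, hmb])
  rw [integral_sub_mul_deriv (fun x hx => hderiv x (hsub₁ hx)) (hf'.mono_set hsub₁),
    integral_sub_mul_deriv (fun x hx => hderiv x (hsub₂ hx)) (hf'.mono_set hsub₂),
    ← integral_add_adjacent_intervals ((hfc.mono hsub₁).intervalIntegrable)
      ((hfc.mono hsub₂).intervalIntegrable)]
  ring

theorem abs_integral_sub_mul_le {g : ℝ → ℝ} {u v w M : ℝ} (huv : u ≤ v)
    (hg : IntervalIntegrable g volume u v) (hM : ∀ x ∈ Icc u v, |g x| ≤ M) :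
    |∫ x in u..v, (x - w) * g x| ≤ M * ∫ x in u..v, |x - w| := by
  have hk : Continuous fun x : ℝ => x - w := by fun_prop
  calc |∫ x in u..v, (x - w) * g x| ≤ ∫ x in u..v, |(x - w) * g x| :=
        abs_integral_le_integral_abs huv
    _ ≤ ∫ x in u..v, |x - w| * M := by
        refine integral_mono_on huv (hg.continuousOn_mul hk.continuousOn).abs
          ((hk.abs.mul continuous_const).intervalIntegrable _ _) fun x hx => ?_
        rw [abs_mul]
        exact mul_le_mul_of_nonneg_left (hM x hx) (abs_nonneg _)
    _ = M * ∫ x in u..v, |x - w| := by rw [intervalIntegral.integral_mul_const, mul_comm]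

theorem integral_abs_sub_left {u v : ℝ} (huv : u ≤ v) :
    ∫ x in u..v, |x - u| = (v - u) ^ 2 / 2 := by
  rw [integral_comp_sub_right (fun x => |x|), sub_self,
    integral_congr (f := fun x => |x|) (g := fun x => x) fun x hx =>
      abs_of_nonneg (uIcc_of_le (sub_nonneg.2 huv) ▸ hx).1]
  simp [integral_id]

theorem integral_abs_sub_right {u v : ℝ} (huv : u ≤ v) :
    ∫ x in u..v, |x - v| = (v - u) ^ 2 / 2 := by
  rw [integral_comp_sub_right (fun x => |x|), sub_self,
    integral_congr (f := fun x => |x|) (g := fun x => -x) fun x hx =>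
      abs_of_nonpos (uIcc_of_le (sub_nonpos.2 huv) ▸ hx).2,
    intervalIntegral.integral_neg, integral_id]
  ring

theorem add_one_rpow_one_div_le_two {p : ℝ} (hp : 1 ≤ p) : (p + 1) ^ (1 / p) ≤ 2 := by
  rw [one_div, Real.rpow_inv_le_iff_of_pos (by linarith) zero_le_two (by linarith)]
  have := one_add_mul_self_le_rpow_one_add (s := 1) (by norm_num) hp
  norm_num at this
  linarith

theorem abs_sub_average_le_of_abs_deriv_le {f f' : ℝ → ℝ} {a b A B : ℝ} (hab : a < b)
    (hf : ∀ x ∈ Icc a b, HasDerivAt f (f' x) x) (hf' : IntervalIntegrable f' volume a b)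
    (hA : ∀ x ∈ Icc a ((a + b) / 2), |f' x| ≤ A) (hB : ∀ x ∈ Icc ((a + b) / 2) b, |f' x| ≤ B) :
    |f ((a + b) / 2) - (1 / (b - a)) * ∫ x in a..b, f x| ≤ (b - a) / 8 * (A + B) := by
  set m := (a + b) / 2 with hm
  have ham : a ≤ m := by linarith
  have hmb : m ≤ b := by linarith
  have hsub₁ : uIcc a m ⊆ uIcc a b := uIcc_subset_uIcc_left (by simp [uIcc, ham, hmb])
  have hsub₂ : uIcc m b ⊆ uIcc a b := uIcc_subset_uIcc_right (by simp [uIcc, ham, hmb])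
  have hleft : |∫ x in a..m, (x - a) * f' x| ≤ A * ((b - a) ^ 2 / 8) := by
    have := abs_integral_sub_mul_le (w := a) ham (hf'.mono_set hsub₁) hA
    rwa [integral_abs_sub_left ham, show (m - a) ^ 2 / 2 = (b - a) ^ 2 / 8 by rw [hm]; ring] at this
  have hright : |∫ x in m..b, (x - b) * f' x| ≤ B * ((b - a) ^ 2 / 8) := by
    have := abs_integral_sub_mul_le (w := b) hmb (hf'.mono_set hsub₂) hB
    rwa [integral_abs_sub_right hmb, show (b - m) ^ 2 / 2 = (b - a) ^ 2 / 8 by rw [hm]; ring] at this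
  have hba : 0 < b - a := sub_pos.2 hab
  calc |f m - (1 / (b - a)) * ∫ x in a..b, f x|
      = |((b - a) * f m - ∫ x in a..b, f x) / (b - a)| := by
        congr 1
        field_simp
    _ = |(∫ x in a..m, (x - a) * f' x) + ∫ x in m..b, (x - b) * f' x| / (b - a) := by
        rw [abs_div, abs_of_pos hba, mul_sub_integral_eq_integral_add_integral ham hmb hf hf']
    _ ≤ (A * ((b - a) ^ 2 / 8) + B * ((b - a) ^ 2 / 8)) / (b - a) := by
        gcongr
        exact (abs_add_le _ _).trans (add_le_add hleft hright)
    _ = (b - a) / 8 * (A + B) := by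
        field_simp

theorem stmt_12 (f f' : ℝ → ℝ) (a b p q c d : ℝ) (hab : a < b)
    (hq : 1 < q) (hpq : 1 / p + 1 / q = 1)
    (hca : c < a) (hbd : b < d)
    (hf : ∀ x ∈ Set.Ioo c d, HasDerivAt f (f' x) x)
    (hint : IntervalIntegrable f' volume a b)
    (hqc : ∀ x ∈ Set.Icc a b, ∀ y ∈ Set.Icc a b, ∀ α ∈ Set.Icc (0:ℝ) 1,
      |f' (α * x + (1 - α) * y)| ^ q ≤ max (|f' x| ^ q) (|f' y| ^ q)) :
    |f ((a + b) / 2) - (1 / (b - a)) * ∫ x in a..b, f x|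
      ≤ (b - a) / (4 * (p + 1) ^ (1 / p)) *
          ((max (|f' ((a + b) / 2)| ^ q) (|f' a| ^ q)) ^ (1 / q)
            + (max (|f' ((a + b) / 2)| ^ q) (|f' b| ^ q)) ^ (1 / q)) := by
  have hq₀ : 0 < q := by linarith
  have hq₁ : 1 / q < 1 := (div_lt_one hq₀).2 hq
  have hp₀ : 0 < p := one_div_pos.1 (by linarith)
  have hp : 1 ≤ p := (div_le_one hp₀).1 (by linarith [one_div_pos.2 hq₀])
  have hqc' : QuasiconvexOn ℝ (Icc a b) fun x => |f' x| ^ q :=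
    quasiconvexOn_iff_le_max.2 ⟨convex_Icc a b, fun x hx y hy α β hα hβ hαβ => by
      simpa [← hαβ] using hqc x hx y hy α ⟨hα, by linarith⟩⟩
  have hm : (a + b) / 2 ∈ Icc a b := ⟨by linarith, by linarith⟩
  calc _ ≤ (b - a) / 8 * ((max (|f' ((a + b) / 2)| ^ q) (|f' a| ^ q)) ^ (1 / q)
            + (max (|f' ((a + b) / 2)| ^ q) (|f' b| ^ q)) ^ (1 / q)) :=
        abs_sub_average_le_of_abs_deriv_le hab
          (fun x hx => hf x ⟨hca.trans_le hx.1, hx.2.trans_lt hbd⟩) hint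
          (fun x hx => abs_le_max_rpow_one_div_of_quasiconvexOn hq₀ hqc' hm (left_mem_Icc.2 hab.le)
            (Icc_subset_uIcc' hx))
          (fun x hx => abs_le_max_rpow_one_div_of_quasiconvexOn hq₀ hqc' hm (right_mem_Icc.2 hab.le)
            (Icc_subset_uIcc hx))
    _ ≤ _ := by
        have := add_one_rpow_one_div_le_two hp
        gcongr
        linarith
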